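/- For every v ≥ 0 and every positive integer n, the integer 𝒫_v(8n-1) = Σ_{r=0}^{v} (-1)^r C(2v+1, 2r) (2r-3)(2r-1) (8n-1)^r is nonzero. -/

import Mathlib

/-! Every term but the constant one is a multiple of `x = 8n - 1`, so `x` divides `𝒫_v(x) - 3`.
A zero value would force `8n - 1 ∣ 3`, impossible since `8n - 1 ≥ 7`. -/

theorem dvd_sum_range_mul_pow_sub_zero {R : Type*} [CommRing R] (c : ℕ → R) (x : R) (v : ℕ) :
    x ∣ (∑ r ∈ Finset.range (v + 1), c r * x ^ r) - c 0 := by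
  rw [Finset.sum_range_succ', pow_zero, mul_one, add_sub_cancel_right]
  exact Finset.dvd_sum fun r _ => Dvd.dvd.mul_left (dvd_pow_self x r.succ_ne_zero) _

theorem calP_at_eight_n_sub_one_ne_zero (v : ℕ) (n : ℕ) (hn : 1 ≤ n) :
    (∑ r ∈ Finset.range (v + 1),
        (-1 : ℤ) ^ r * (Nat.choose (2 * v + 1) (2 * r)) * (2 * (r : ℤ) - 3) *
          (2 * (r : ℤ) - 1) * (8 * (n : ℤ) - 1) ^ r) ≠ 0 := by
  intro hzero
  have hdvd : 8 * (n : ℤ) - 1 ∣ 3 := by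
    simpa [hzero] using dvd_sum_range_mul_pow_sub_zero
      (fun r : ℕ => (-1 : ℤ) ^ r * (Nat.choose (2 * v + 1) (2 * r)) * (2 * (r : ℤ) - 3) *
        (2 * (r : ℤ) - 1)) (8 * (n : ℤ) - 1) v
  have := Int.le_of_dvd three_pos hdvd
  omega
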